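/- arXiv:2009.03260 — 2 statements merged into one kernel-verified Lean document; each statement's English description precedes it below -/
import Mathlib

section
/- Let p ≥ 2 be an even integer. Then there exist constants 0 < c ≤ C (depending only on p, of the form 2^{-O(p)} and 2^{O(p)}) such that for all real f, δ: f^p + p·f^{p-1}·δ + c·(f^{p-2}·δ² + δ^p) ≤ (f + δ)^p ≤ f^p + p·f^{p-1}·δ + C·(f^{p-2}·δ² + δ^p). -/
/-!
Upper bound: in the binomial expansion of `(f + δ) ^ p`, each term `f ^ k * δ ^ (p - k)` with
`k ≤ p - 2` is at most `f ^ (p - 2) * δ ^ 2 + δ ^ p` (compare `|f|` and `|δ|` with their maximum),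
and the binomial coefficients add up to at most `2 ^ p`.

Lower bound: put `a = f + δ / 2` and `b = δ / 2`, so that `f = a - b` and `f + δ = a + b`. For
even `p` every term of `(a + b) ^ p + (a - b) ^ p` is nonnegative, so this sum is at least
`2 * a ^ p + b ^ p + a ^ (p - 2) * b ^ 2`, while convexity of `x ↦ x ^ p` gives
`2 * a ^ p ≥ 2 * f ^ p + p * f ^ (p - 1) * δ`. Finally `(a - b) ^ (p - 2) ≤ 2 ^ (p - 2) *
(a ^ (p - 2) + b ^ (p - 2))` bounds `f ^ (p - 2) * δ ^ 2 + δ ^ p` by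
`2 ^ (p + 1) * (b ^ p + a ^ (p - 2) * b ^ 2)`.
-/

section LinearOrderedCommRing

variable {R : Type*} [CommRing R] [LinearOrder R] [IsStrictOrderedRing R] {n : ℕ}

theorem Even.pow_mul_pow_sub_le_pow_add_pow (hn : Even n) {m : ℕ} (hm : m ≤ n) (x y : R) :
    x ^ m * y ^ (n - m) ≤ x ^ n + y ^ n := by
  set M := max |x| |y|
  have hM : M ^ n ≤ x ^ n + y ^ n := by
    rw [← hn.pow_abs x, ← hn.pow_abs y]
    obtain h | h : M = |x| ∨ M = |y| := max_choice _ _ <;> rw [h] <;> simp [pow_nonneg]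
  calc x ^ m * y ^ (n - m) ≤ |x| ^ m * |y| ^ (n - m) := by
        rw [← abs_pow, ← abs_pow, ← abs_mul]; exact le_abs_self _
    _ ≤ M ^ m * M ^ (n - m) := by gcongr <;> simp [M]
    _ = M ^ n := by rw [← pow_add, Nat.add_sub_cancel' hm]
    _ ≤ x ^ n + y ^ n := hM

theorem Even.sub_pow_le_two_pow_mul (hn : Even n) (x y : R) :
    (x - y) ^ n ≤ 2 ^ n * (x ^ n + y ^ n) := by
  rw [← hn.pow_abs, ← hn.pow_abs x, ← hn.pow_abs y]
  calc |x - y| ^ n ≤ (|x| + |y|) ^ n := by gcongr; exact abs_sub _ _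
    _ ≤ 2 ^ (n - 1) * (|x| ^ n + |y| ^ n) := add_pow_le (abs_nonneg x) (abs_nonneg y) n
    _ ≤ 2 ^ n * (|x| ^ n + |y| ^ n) := by
        gcongr
        · exact one_le_two
        · exact n.sub_le 1

theorem Even.two_mul_pow_add_two_mul_pow_mul_pow_le_add_pow_add_sub_pow (hn : Even n) {k : ℕ}
    (hk : Even k) (hk0 : k ≠ 0) (hkn : k ≤ n) (a b : R) :
    2 * a ^ n + 2 * (a ^ (n - k) * b ^ k) ≤ (a + b) ^ n + (a - b) ^ n := by
  set t : ℕ → R := fun m ↦ a ^ m * b ^ (n - m) * n.choose m + a ^ m * (-b) ^ (n - m) * n.choose m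
  have hsum : (a + b) ^ n + (a - b) ^ n = ∑ m ∈ Finset.range (n + 1), t m := by
    rw [sub_eq_add_neg, add_pow, add_pow, ← Finset.sum_add_distrib]
  have ht : ∀ m ∈ Finset.range (n + 1), 0 ≤ t m := by
    intro m hm
    rcases Nat.even_or_odd (n - m) with he | ho
    · have hme : Even m :=
        ((Nat.even_sub (Nat.lt_succ_iff.1 (Finset.mem_range.1 hm))).1 he).1 hn
      simp only [t, he.neg_pow]
      have := hme.pow_nonneg a
      have := he.pow_nonneg b
      positivity
    · simp [t, ho.neg_pow]
  have htn : t n = 2 * a ^ n := by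
    simp only [t, tsub_self, pow_zero, mul_one, Nat.choose_self, Nat.cast_one]; ring
  have htk : 2 * (a ^ (n - k) * b ^ k) ≤ t (n - k) := by
    simp only [t, Nat.sub_sub_self hkn, hk.neg_pow]
    have : (1 : R) ≤ n.choose (n - k) := by exact_mod_cast Nat.choose_pos (n.sub_le k)
    have hnk : Even (n - k) := (Nat.even_sub hkn).2 (iff_of_true hn hk)
    nlinarith [mul_nonneg (hnk.pow_nonneg a) (hk.pow_nonneg b)]
  rw [hsum]
  calc _ ≤ t n + t (n - k) := by rw [htn]; linarith
    _ ≤ _ := Finset.add_le_sum ht (by simp) (by simp) (by omega)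

theorem Even.pow_mul_pow_sub_le_pow_mul_sq_add_pow (hn : Even n) {m : ℕ} (hm : m ≤ n)
    (x y : R) : x ^ m * y ^ (n + 2 - m) ≤ x ^ n * y ^ 2 + y ^ (n + 2) := by
  calc x ^ m * y ^ (n + 2 - m) = x ^ m * y ^ (n - m) * y ^ 2 := by
        rw [mul_assoc, ← pow_add, Nat.sub_add_comm hm]
    _ ≤ (x ^ n + y ^ n) * y ^ 2 := by
        gcongr
        exact hn.pow_mul_pow_sub_le_pow_add_pow hm x y
    _ = x ^ n * y ^ 2 + y ^ (n + 2) := by ring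

theorem Even.add_pow_le_pow_add_mul_add (hn : Even n) (f δ : R) :
    (f + δ) ^ (n + 2) ≤
      f ^ (n + 2) + (n + 2) * f ^ (n + 1) * δ + 2 ^ (n + 2) * (f ^ n * δ ^ 2 + δ ^ (n + 2)) := by
  set h := f ^ n * δ ^ 2 + δ ^ (n + 2)
  have hh : 0 ≤ h := add_nonneg (mul_nonneg (hn.pow_nonneg f) (sq_nonneg δ))
    ((hn.add even_two).pow_nonneg δ)
  have hchoose : ∑ m ∈ Finset.range (n + 1), ((n + 2).choose m : R) ≤ 2 ^ (n + 2) := by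
    have : ∑ m ∈ Finset.range (n + 1), (n + 2).choose m ≤ 2 ^ (n + 2) :=
      calc _ ≤ ∑ m ∈ Finset.range (n + 2 + 1), (n + 2).choose m :=
            Finset.sum_le_sum_of_subset (Finset.range_subset_range.2 (by omega))
        _ = 2 ^ (n + 2) := Nat.sum_range_choose _
    exact_mod_cast this
  have hlow : ∑ m ∈ Finset.range (n + 1), f ^ m * δ ^ (n + 2 - m) * (n + 2).choose m
      ≤ 2 ^ (n + 2) * h := by
    calc _ ≤ ∑ m ∈ Finset.range (n + 1), h * (n + 2).choose m := by
          gcongr with m hm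
          exact hn.pow_mul_pow_sub_le_pow_mul_sq_add_pow
            (Nat.lt_succ_iff.1 (Finset.mem_range.1 hm)) f δ
      _ ≤ 2 ^ (n + 2) * h := by
          rw [← Finset.mul_sum, mul_comm]; exact mul_le_mul_of_nonneg_right hchoose hh
  rw [add_pow, Finset.sum_range_succ, Finset.sum_range_succ, show n + 2 - (n + 1) = 1 by omega,
    Nat.sub_self, Nat.choose_succ_self_right, Nat.choose_self]
  push_cast
  linarith

end LinearOrderedCommRing

section LinearOrderedField

variable {K : Type*} [Field K] [LinearOrder K] [IsStrictOrderedRing K] {n : ℕ}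

theorem Even.one_add_mul_le_pow (hn : Even n) (a : K) : 1 + n * a ≤ (1 + a) ^ n := by
  rcases le_or_gt (-2) a with ha | ha
  · exact _root_.one_add_mul_le_pow ha n
  rcases n.eq_zero_or_pos with rfl | hn0
  · simp
  have : (1 : K) ≤ n := by exact_mod_cast hn0
  nlinarith [hn.pow_nonneg (1 + a)]

theorem Even.pow_add_mul_sub_le_pow (hn : Even n) (x y : K) :
    y ^ n + n * y ^ (n - 1) * (x - y) ≤ x ^ n := by
  rcases n.eq_zero_or_pos with rfl | hn0
  · simp
  rcases eq_or_ne y 0 with rfl | hy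
  · have : n - 1 ≠ 0 := by obtain ⟨k, rfl⟩ := hn; omega
    simpa [zero_pow hn0.ne', zero_pow this] using hn.pow_nonneg x
  have hpow : y ^ n = y ^ (n - 1) * y := by rw [← pow_succ, Nat.sub_add_cancel hn0]
  calc y ^ n + n * y ^ (n - 1) * (x - y) = y ^ n * (1 + n * (x / y - 1)) := by
        rw [hpow]; field_simp
    _ ≤ y ^ n * (1 + (x / y - 1)) ^ n :=
        mul_le_mul_of_nonneg_left (hn.one_add_mul_le_pow _) (hn.pow_nonneg y)
    _ = x ^ n := by rw [add_sub_cancel, div_pow, mul_div_cancel₀ _ (pow_ne_zero n hy)]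

theorem Even.pow_add_mul_add_le_add_pow (hn : Even n) (f δ : K) :
    f ^ (n + 2) + (n + 2) * f ^ (n + 1) * δ + (f ^ n * δ ^ 2 + δ ^ (n + 2)) / 2 ^ (n + 3) ≤
      (f + δ) ^ (n + 2) := by
  obtain ⟨a, b, rfl, rfl⟩ : ∃ a b, f = a - b ∧ δ = 2 * b := ⟨f + δ / 2, δ / 2, by ring, by ring⟩
  have hn2 : Even (n + 2) := hn.add even_two
  have hsym : 2 * a ^ (n + 2) + b ^ (n + 2) + a ^ n * b ^ 2 ≤
      (a + b) ^ (n + 2) + (a - b) ^ (n + 2) := by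
    have hk2 := hn2.two_mul_pow_add_two_mul_pow_mul_pow_le_add_pow_add_sub_pow even_two
      two_ne_zero (by omega) a b
    have hkn := hn2.two_mul_pow_add_two_mul_pow_mul_pow_le_add_pow_add_sub_pow hn2
      (by omega) le_rfl a b
    simp only [Nat.add_sub_cancel, Nat.sub_self, pow_zero, one_mul] at hk2 hkn
    linarith
  have htan : (a - b) ^ (n + 2) + (n + 2) * (a - b) ^ (n + 1) * b ≤ a ^ (n + 2) := by
    have := hn2.pow_add_mul_sub_le_pow a (a - b)
    rw [show n + 2 - 1 = n + 1 by omega, sub_sub_cancel] at this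
    exact_mod_cast this
  have hcmp : (a - b) ^ n * (2 * b) ^ 2 + (2 * b) ^ (n + 2) ≤
      2 ^ (n + 3) * (b ^ (n + 2) + a ^ n * b ^ 2) := by
    have := hn.sub_pow_le_two_pow_mul a b
    have := hn.pow_nonneg a
    calc _ ≤ 2 ^ n * (a ^ n + b ^ n) * (2 * b) ^ 2 + (2 * b) ^ (n + 2) := by gcongr
      _ = 2 ^ (n + 2) * (a ^ n * b ^ 2) + 2 ^ (n + 3) * b ^ (n + 2) := by ring
      _ ≤ _ := by
          have h23 : (2 : K) ^ (n + 2) ≤ 2 ^ (n + 3) := pow_le_pow_right₀ one_le_two (by omega)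
          linarith [mul_le_mul_of_nonneg_right h23 (by positivity : 0 ≤ a ^ n * b ^ 2)]
  rw [show a - b + 2 * b = a + b by ring]
  have : ((a - b) ^ n * (2 * b) ^ 2 + (2 * b) ^ (n + 2)) / 2 ^ (n + 3) ≤
      b ^ (n + 2) + a ^ n * b ^ 2 := by
    rw [div_le_iff₀ (by positivity)]; linarith
  linarith

end LinearOrderedField

theorem pth_power_sandwich (p : ℕ) (hp : Even p) (hp2 : 2 ≤ p) :
    ∃ c C : ℝ, 0 < c ∧ c ≤ C ∧ ∀ f δ : ℝ,
      f^p + p * f^(p-1) * δ + c * (f^(p-2) * δ^2 + δ^p) ≤ (f + δ)^p ∧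
      (f + δ)^p ≤ f^p + p * f^(p-1) * δ + C * (f^(p-2) * δ^2 + δ^p) := by
  obtain ⟨n, rfl⟩ : ∃ n, p = n + 2 := ⟨p - 2, by omega⟩
  have hn : Even n := (Nat.even_add.1 hp).2 even_two
  refine ⟨1 / 2 ^ (n + 3), 2 ^ (n + 2), by positivity, ?_, fun f δ ↦ ?_⟩
  · calc (1 : ℝ) / 2 ^ (n + 3) ≤ 1 := div_le_one_of_le₀ (one_le_pow₀ one_le_two) (by positivity)
      _ ≤ 2 ^ (n + 2) := one_le_pow₀ one_le_two
  simp only [show n + 2 - 1 = n + 1 by omega, Nat.add_sub_cancel, Nat.cast_add, Nat.cast_ofNat,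
    one_div_mul_eq_div]
  exact ⟨hn.pow_add_mul_add_le_add_pow f δ, hn.add_pow_le_pow_add_mul_add f δ⟩
end

section
/- Suppose w⁺', w⁻', w⁺'', w⁻'' ≥ 0, a, b > 0 satisfy w⁺'/a - w⁻'/b = w⁺''/a - w⁻''/b, where (w⁺'', w⁻'') is pointwise minimal nonnegative with this property. If additionally w⁺'/u⁺ = w⁻'/u⁻ for some u⁺, u⁻ > 0 with a = u⁺ - f̂, b = u⁻ + f̂, and (u⁺-f̂)/(u⁻+f̂) = (1 ± ε)·u⁺/u⁻ for some 0 ≤ ε < 1, then w⁺'' + w⁻'' ≤ O(ε)·(w⁺' + w⁻'') i.e. there is an absolute constant C with w⁺'' + w⁻'' ≤ C·ε·(w⁺' + w⁻'). -/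
/-!
Minimality bounds `(w⁺'', w⁻'')` by the explicit solution `(a D⁺, b D⁻)` of
`v₁ / a - v₂ / b = D`, only one entry of which is nonzero. Writing `w⁺' = t u⁺`, `w⁻' = t u⁻`,
that entry is `t (u⁺ b - u⁻ a) / b` or `t (u⁻ a - u⁺ b) / a`, and the deviation hypothesis,
cleared of denominators, reads `|a u⁻ - u⁺ b| ≤ ε u⁺ b`; hence the reduced weights sum to at most
`ε (w⁺' + w⁻')`.
-/

lemma add_le_of_minimal_nonneg_solution {a b D x y : ℝ} (ha : 0 < a) (hb : 0 < b)
    (hmin : ∀ v₁ v₂ : ℝ, 0 ≤ v₁ → 0 ≤ v₂ → v₁ / a - v₂ / b = D → x ≤ v₁ ∧ y ≤ v₂) :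
    x + y ≤ a * max D 0 + b * max (-D) 0 := by
  obtain ⟨hx, hy⟩ := hmin (a * max D 0) (b * max (-D) 0) (by positivity) (by positivity)
    (by rw [mul_div_cancel_left₀ _ ha.ne', mul_div_cancel_left₀ _ hb.ne',
      max_zero_sub_max_neg_zero_eq_self])
  linarith

lemma abs_mul_sub_mul_le_of_abs_div_sub_div_le {a b up um ε : ℝ} (hb : 0 < b) (hum : 0 < um)
    (h : |a / b - up / um| ≤ ε * (up / um)) : |a * um - up * b| ≤ ε * up * b := by
  have hbum : 0 < b * um := mul_pos hb hum
  have hfactor : a * um - up * b = (a / b - up / um) * (b * um) := by field_simp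
  calc |a * um - up * b| = |a / b - up / um| * (b * um) := by
        rw [hfactor, abs_mul, abs_of_pos hbum]
    _ ≤ ε * (up / um) * (b * um) := mul_le_mul_of_nonneg_right h hbum.le
    _ = ε * up * b := by field_simp

section Deviation

variable {t up um a b ε : ℝ}

lemma mul_max_div_sub_div_le (ht : 0 ≤ t) (hup : 0 ≤ up) (ha : 0 < a) (hb : 0 < b)
    (hε : 0 ≤ ε) (hdev : |a * um - up * b| ≤ ε * up * b) :
    a * max (t * up / a - t * um / b) 0 ≤ ε * (t * up) := by
  rw [mul_max_of_nonneg _ _ ha.le, mul_zero]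
  refine max_le ?_ (by positivity)
  have hD : a * (t * up / a - t * um / b) = t * (up * b - um * a) / b := by
    field_simp
  rw [hD, div_le_iff₀ hb]
  calc t * (up * b - um * a) ≤ t * (ε * up * b) :=
        mul_le_mul_of_nonneg_left (by linarith [(abs_le.mp hdev).1]) ht
    _ = ε * (t * up) * b := by ring

lemma mul_max_neg_div_sub_div_le (ht : 0 ≤ t) (hum : 0 < um) (ha : 0 < a)
    (hb : 0 < b) (hε : 0 ≤ ε) (hdev : |a * um - up * b| ≤ ε * up * b) :
    b * max (-(t * up / a - t * um / b)) 0 ≤ ε * (t * um) := by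
  rw [mul_max_of_nonneg _ _ hb.le, mul_zero]
  refine max_le ?_ (by positivity)
  have hD : b * -(t * up / a - t * um / b) = t * (um * a - up * b) / a := by
    field_simp
    ring
  rw [hD, div_le_iff₀ ha]
  rcases le_total (um * a) (up * b) with hle | hle
  · have : t * (um * a - up * b) ≤ 0 := mul_nonpos_of_nonneg_of_nonpos ht (by linarith)
    have : 0 ≤ ε * (t * um) * a := by positivity
    linarith
  · calc t * (um * a - up * b) ≤ t * (ε * (up * b)) :=
          mul_le_mul_of_nonneg_left (by linarith [(abs_le.mp hdev).2]) ht
      _ ≤ t * (ε * (um * a)) := by gcongr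
      _ = ε * (t * um) * a := by ring

end Deviation

theorem weight_reduction : ∃ C : ℝ, 0 < C ∧
    ∀ (wp' wm' wp'' wm'' up um fh ε : ℝ),
      0 ≤ wp' → 0 ≤ wm' → 0 < up → 0 < um → 0 < up - fh → 0 < um + fh →
      wp' / up = wm' / um →
      0 ≤ ε → ε < 1 →
      |(up - fh)/(um + fh) - up/um| ≤ ε * (up/um) →
      0 ≤ wp'' → 0 ≤ wm'' →
      wp''/(up - fh) - wm''/(um + fh) = wp'/(up - fh) - wm'/(um + fh) →
      (∀ v₁ v₂ : ℝ, 0 ≤ v₁ → 0 ≤ v₂ →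
        v₁/(up - fh) - v₂/(um + fh) = wp'/(up - fh) - wm'/(um + fh) →
        wp'' ≤ v₁ ∧ wm'' ≤ v₂) →
      wp'' + wm'' ≤ C * ε * (wp' + wm') := by
  refine ⟨1, one_pos, ?_⟩
  intro wp' wm' wp'' wm'' up um fh ε hwp _ hup hum ha hb hprop hε _ hdev _ _ _ hmin
  obtain ⟨t, ht, rfl, rfl⟩ : ∃ t, 0 ≤ t ∧ wp' = t * up ∧ wm' = t * um :=
    ⟨wp' / up, by positivity, (div_mul_cancel₀ _ hup.ne').symm,
      by rw [hprop, div_mul_cancel₀ _ hum.ne']⟩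
  have hdev' := abs_mul_sub_mul_le_of_abs_div_sub_div_le hb hum hdev
  have hsum := add_le_of_minimal_nonneg_solution ha hb hmin
  have hp := mul_max_div_sub_div_le ht hup.le ha hb hε hdev'
  have hm := mul_max_neg_div_sub_div_le ht hum ha hb hε hdev'
  linarith
end
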